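/- arXiv:1602.02407 — 6 statements merged into one kernel-verified Lean document; each statement's English description precedes it below -/
import Mathlib

section
/- Let p be a prime number and let n be a positive integer. Then S_n(n) ≡ p (mod n) if and only if the following conditions all hold: (i) the prime power factorization of n has the form n = p^s · q_1 ⋯ q_r where 0 ≤ s ≤ 2 and q_1, …, q_r are distinct primes different from p, each appearing to the first power; (ii) for every i ∈ {1,…,r}, q_i − 1 divides n and n/q_i + p ≡ 0 (mod q_i); (iii) if s = 1, then p − 1 does not divide n; (iv) if s = 2, then p − 1 divides n and n/p² + 1 ≡ 0 (mod p). -/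
/-!
If `q ^ e ∣ n`, the sum `S n n` splits into `n / q ^ e` full periods modulo `q ^ e`, so it is
`n / q ^ e` times the power sum `∑ x : ZMod (q ^ e), x ^ n`. Non-units are nilpotent of order at
most `e ≤ n`, so they contribute nothing. If `q - 1 ∣ n`, then `φ (q ^ e) ∣ n` and every unit
contributes `1`, giving `φ (q ^ e) ≡ -q ^ (e - 1)`; otherwise a unit `u` with `u ^ n ≢ 1 (mod q)`
makes `u ^ n - 1` a unit that annihilates the sum. Hence
`S n n ≡ -(n / q ^ e) * q ^ (e - 1)` or `0` modulo `q ^ e`, and comparing with `p` one prime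
power at a time gives every condition of the theorem; the Chinese remainder theorem gives the
converse.
-/

/-- `S k n = ∑_{i=1}^{n} i^k`. -/
def S (k n : ℕ) : ℕ := ∑ i ∈ Finset.Icc 1 n, i ^ k

open Finset

theorem Fintype.sum_pow_eq_zero_of_isUnit {R : Type*} [CommRing R] [Fintype R] {u : R} {k : ℕ}
    (hu : IsUnit u) (hu' : IsUnit (u ^ k - 1)) : ∑ x : R, x ^ k = 0 := by
  have hrot : u ^ k * ∑ x : R, x ^ k = ∑ x : R, x ^ k := by
    simpa only [mul_sum, mul_pow, IsUnit.unit_spec] using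
      hu.unit.mulLeft_bijective.sum_comp (· ^ k)
  rw [← hu'.mul_right_eq_zero, sub_mul, one_mul, hrot, sub_self]

theorem ZMod.sum_range_natCast {M : Type*} [AddCommMonoid M] (d : ℕ) [NeZero d]
    (f : ZMod d → M) : ∑ i ∈ range d, f i = ∑ x : ZMod d, f x :=
  Finset.sum_nbij' (fun i => (i : ZMod d)) ZMod.val (by simp) (by simp [ZMod.val_lt])
    (fun i hi => ZMod.val_cast_of_lt (mem_range.mp hi)) (fun x _ => ZMod.natCast_zmod_val x)
    (fun _ _ => rfl)

namespace ZMod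

variable {q e k : ℕ} [Fact q.Prime]

theorem pow_eq_zero_of_not_isUnit_of_le {x : ZMod (q ^ e)} (hx : ¬IsUnit x) (hek : e ≤ k) :
    x ^ k = 0 := by
  rcases e.eq_zero_or_pos with rfl | he
  · have : Subsingleton (ZMod (q ^ 0)) := subsingleton_iff.mpr (pow_zero q)
    exact Subsingleton.elim _ _
  rw [← natCast_zmod_val x, isUnit_natCast_iff_not_dvd_pow Fact.out he, not_not] at hx
  obtain ⟨c, hc⟩ := hx
  rw [← natCast_zmod_val x, hc, ← Nat.add_sub_cancel' hek, pow_add, ← Nat.cast_pow, mul_pow,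
    Nat.cast_mul, natCast_self, zero_mul, zero_mul]

theorem sum_pow_eq_totient (hek : e ≤ k) (hk : (q ^ e).totient ∣ k) :
    ∑ x : ZMod (q ^ e), x ^ k = (q ^ e).totient := by
  classical
  have hpow : ∀ x : ZMod (q ^ e), x ^ k = (1 : MulChar (ZMod (q ^ e)) (ZMod (q ^ e))) x := by
    intro x
    by_cases hx : IsUnit x
    · obtain ⟨c, hc⟩ := hk
      rw [MulChar.one_apply hx, ← hx.unit_spec, ← Units.val_pow_eq_pow_val, hc, pow_mul,
        pow_totient, one_pow, Units.val_one]
    · rw [MulChar.map_nonunit _ hx, pow_eq_zero_of_not_isUnit_of_le hx hek]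
  simp_rw [hpow, MulChar.sum_one_eq_card_units, card_units_eq_totient]

theorem sum_pow_eq_zero (he : 0 < e) (hk : ¬(q - 1) ∣ k) : ∑ x : ZMod (q ^ e), x ^ k = 0 := by
  have hq := Fact.out (p := q.Prime)
  obtain ⟨a, ha⟩ : ∃ a : (ZMod q)ˣ, a ^ k ≠ 1 := by
    by_contra! h
    exact hk (ZMod.card q ▸ (FiniteField.forall_pow_eq_one_iff (ZMod q) k).mp h)
  set b := (a : ZMod q).val
  have hb : ¬q ∣ b := by
    rw [← natCast_eq_zero_iff, natCast_zmod_val]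
    exact a.ne_zero
  have hbk : 1 ≤ b ^ k := Nat.one_le_pow _ _ (Nat.pos_of_ne_zero (by rintro h; simp [h] at hb))
  have hbk' : ¬q ∣ b ^ k - 1 := by
    rw [← natCast_eq_zero_iff, Nat.cast_sub hbk, Nat.cast_pow, natCast_zmod_val, Nat.cast_one,
      sub_eq_zero]
    exact fun h => ha (Units.ext (by simpa using h))
  refine Fintype.sum_pow_eq_zero_of_isUnit (u := (b : ZMod (q ^ e)))
    ((isUnit_natCast_iff_not_dvd_pow hq he).mpr hb) ?_
  rwa [← Nat.cast_pow, ← Nat.cast_one, ← Nat.cast_sub hbk, isUnit_natCast_iff_not_dvd_pow hq he]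

theorem sum_pow_of_prime_pow_dvd (he : 0 < e) (hk : q ^ e ∣ k) (hk0 : k ≠ 0) :
    ∑ x : ZMod (q ^ e), x ^ k = if q - 1 ∣ k then -(q : ZMod (q ^ e)) ^ (e - 1) else 0 := by
  have hq := Fact.out (p := q.Prime)
  split_ifs with hq1
  · have htot : (q ^ e).totient = q ^ (e - 1) * (q - 1) := Nat.totient_prime_pow hq he
    have hek : e ≤ k := (Nat.lt_pow_self hq.one_lt).le.trans (Nat.le_of_dvd (by omega) hk)
    have hcop : (q ^ (e - 1)).Coprime (q - 1) :=
      ((Nat.coprime_self_sub_right hq.one_le).mpr (Nat.coprime_one_right q)).pow_left _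
    rw [sum_pow_eq_totient hek (htot ▸ hcop.mul_dvd_of_dvd_of_dvd
      ((pow_dvd_pow q (Nat.sub_le e 1)).trans hk) hq1), htot, Nat.cast_mul, Nat.cast_pow,
      Nat.cast_sub hq.one_le, mul_sub, ← pow_succ, Nat.sub_add_cancel he, ← Nat.cast_pow,
      natCast_self]
    simp
  · exact sum_pow_eq_zero he hq1

end ZMod

theorem S_eq_sum_range (k n : ℕ) : S k n = ∑ i ∈ range n, (1 + i) ^ k := by
  rw [S, ← Finset.Ico_add_one_right_eq_Icc, Finset.sum_Ico_eq_sum_range, Nat.add_sub_cancel]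

theorem S_mul_cast (k d m : ℕ) [NeZero d] :
    (S k (d * m) : ZMod d) = m * ∑ x : ZMod d, x ^ k := by
  have hblock : ∑ i ∈ range d, (1 + (i : ZMod d)) ^ k = ∑ x : ZMod d, x ^ k := by
    rw [ZMod.sum_range_natCast d (fun x => (1 + x) ^ k)]
    exact Equiv.sum_comp (Equiv.addLeft (1 : ZMod d)) (· ^ k)
  induction m with
  | zero => simp [S]
  | succ m ih =>
    rw [S_eq_sum_range] at ih ⊢
    rw [mul_add_one, sum_range_add, Nat.cast_add, ih, Nat.cast_sum]
    simp only [Nat.cast_pow, Nat.cast_add, Nat.cast_mul, Nat.cast_one, ZMod.natCast_self,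
      zero_mul, zero_add, hblock]
    ring

section SelfPowerSum

variable {q e n : ℕ}

theorem S_self_cast [Fact q.Prime] (he : 0 < e) (hn : n ≠ 0) (h : q ^ e ∣ n) :
    (S n n : ZMod (q ^ e)) =
      if q - 1 ∣ n then -((n / q ^ e : ℕ) * (q : ZMod (q ^ e)) ^ (e - 1)) else 0 := by
  have hperiod := S_mul_cast n (q ^ e) (n / q ^ e)
  rw [Nat.mul_div_cancel' h] at hperiod
  rw [hperiod, ZMod.sum_pow_of_prime_pow_dvd he h hn]
  split_ifs <;> ring

theorem S_self_cast_of_dvd [Fact q.Prime] (hn : n ≠ 0) (h : q ∣ n) :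
    (S n n : ZMod q) = if q - 1 ∣ n then -((n / q : ℕ) : ZMod q) else 0 := by
  have hS := S_self_cast (q := q) (e := 1) one_pos hn (by rwa [pow_one])
  rw [pow_one] at hS
  simpa using hS

theorem pow_dvd_S_self (hq : q.Prime) (hn : n ≠ 0) (h : q ^ (e + 1) ∣ n) : q ^ e ∣ S n n := by
  have := Fact.mk hq
  set f := ZMod.castHom (pow_dvd_pow q e.le_succ) (ZMod (q ^ e))
  have hS := congrArg f (S_self_cast e.succ_pos hn h)
  rw [map_natCast] at hS
  rw [← ZMod.natCast_eq_zero_iff, hS]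
  split_ifs
  · rw [map_neg, map_mul, map_pow, map_natCast, map_natCast, Nat.succ_sub_one, ← Nat.cast_pow,
      ZMod.natCast_self, mul_zero, neg_zero]
  · exact map_zero f

theorem S_self_modEq_self_iff (hq : q.Prime) (hn : n ≠ 0) (h : q ∣ n) :
    S n n ≡ q [MOD q] ↔ (q - 1 ∣ n → q ^ 2 ∣ n) := by
  have := Fact.mk hq
  rw [← ZMod.natCast_eq_natCast_iff, ZMod.natCast_self, pow_two, ← Nat.dvd_div_iff_mul_dvd h,
    ← ZMod.natCast_eq_zero_iff (n / q), S_self_cast_of_dvd hn h]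
  by_cases hq1 : q - 1 ∣ n <;> simp [hq1]

theorem S_self_modEq_iff_of_not_dvd {a : ℕ} (hq : q.Prime) (hn : n ≠ 0) (h : q ∣ n)
    (ha : ¬q ∣ a) : S n n ≡ a [MOD q] ↔ q - 1 ∣ n ∧ q ∣ n / q + a := by
  have := Fact.mk hq
  rw [← ZMod.natCast_eq_zero_iff] at ha
  rw [← ZMod.natCast_eq_natCast_iff, S_self_cast_of_dvd hn h,
    ← ZMod.natCast_eq_zero_iff (n / q + a), Nat.cast_add]
  by_cases hq1 : q - 1 ∣ n
  · simp only [hq1, if_true, true_and]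
    constructor <;> intro h' <;> linear_combination -h'
  · simp only [hq1, if_false, false_and, iff_false]
    exact fun h' => ha h'.symm

theorem S_self_modEq_iff_of_sq_dvd (hq : q.Prime) (hn : n ≠ 0) (h : q ^ 2 ∣ n) :
    S n n ≡ q [MOD q ^ 2] ↔ q - 1 ∣ n ∧ q ∣ n / q ^ 2 + 1 := by
  have := Fact.mk hq
  rw [← ZMod.natCast_eq_natCast_iff, S_self_cast two_pos hn h]
  by_cases hq1 : q - 1 ∣ n
  · simp only [hq1, if_true, true_and]
    rw [← Nat.mul_dvd_mul_iff_left hq.pos, ← pow_two, ← ZMod.natCast_eq_zero_iff]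
    push_cast
    constructor <;> intro h' <;> linear_combination -h'
  · have hq2 : ¬q ^ 2 ∣ q ^ 1 := by rw [Nat.pow_dvd_pow_iff_le_right hq.one_lt]; omega
    rw [pow_one, ← ZMod.natCast_eq_zero_iff] at hq2
    simp only [hq1, if_false, false_and, iff_false]
    exact fun h' => hq2 h'.symm

theorem not_sq_dvd_of_S_self_modEq {a : ℕ} (hq : q.Prime) (hn : n ≠ 0) (ha : ¬q ∣ a)
    (H : S n n ≡ a [MOD n]) : ¬q ^ 2 ∣ n := fun h2 =>
  ha ((H.dvd_iff ((dvd_pow_self q two_ne_zero).trans h2)).mp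
    (pow_one q ▸ pow_dvd_S_self hq hn h2))

theorem not_pow_three_dvd_of_S_self_modEq (hq : q.Prime) (hn : n ≠ 0)
    (H : S n n ≡ q [MOD n]) : ¬q ^ 3 ∣ n := fun h3 => by
  have hq2 : q ^ 2 ∣ q :=
    (H.dvd_iff ((pow_dvd_pow q (by norm_num)).trans h3)).mp (pow_dvd_S_self hq hn h3)
  have := (Nat.pow_dvd_pow_iff_le_right hq.one_lt (k := 2) (l := 1)).mp (by rwa [pow_one])
  omega

end SelfPowerSum

theorem Nat.eq_pow_factorization_mul_prod_primeFactors_erase {n p : ℕ} (hn : n ≠ 0)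
    (h : ∀ q, q.Prime → q ≠ p → ¬q ^ 2 ∣ n) :
    n = p ^ n.factorization p * ∏ q ∈ n.primeFactors.erase p, q := by
  have hsq : Squarefree (ordCompl[p] n) := by
    rw [Nat.squarefree_iff_prime_squarefree]
    intro q hq hq2
    have hqp : q ≠ p := by
      rintro rfl
      exact Nat.not_dvd_ordCompl hq hn (dvd_of_mul_right_dvd hq2)
    exact h q hq hqp (pow_two q ▸ hq2.trans (Nat.ordCompl_dvd n p))
  have hpf : (ordCompl[p] n).primeFactors = n.primeFactors.erase p := by
    rw [← Nat.support_factorization, Nat.factorization_ordCompl, Finsupp.support_erase,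
      Nat.support_factorization]
  rw [← hpf, Nat.prod_primeFactors_of_squarefree hsq, Nat.ordProj_mul_ordCompl_eq_self]

theorem Nat.ModEq.pow_mul_prod_primes {a b p s : ℕ} {Q : Finset ℕ} (hp : p.Prime)
    (hQ : ∀ q ∈ Q, q.Prime ∧ q ≠ p) (hps : a ≡ b [MOD p ^ s]) (hQab : ∀ q ∈ Q, a ≡ b [MOD q]) :
    a ≡ b [MOD p ^ s * ∏ q ∈ Q, q] := by
  have hprod : a ≡ b [MOD ∏ q ∈ Q, q] := by
    simp only [Nat.modEq_iff_dvd, Int.natCast_dvd] at hQab ⊢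
    exact Finset.prod_primes_dvd _ (fun q hq => (hQ q hq).1.prime) hQab
  have hcop : (p ^ s).Coprime (∏ q ∈ Q, q) := Nat.Coprime.pow_left _ <|
    Nat.Coprime.prod_right fun q hq => (Nat.coprime_primes hp (hQ q hq).1).mpr (hQ q hq).2.symm
  exact (Nat.modEq_and_modEq_iff_modEq_mul hcop).mp ⟨hps, hprod⟩

/-- Characterization of solutions of `S_n(n) ≡ p (mod n)` for a prime `p`. -/
theorem stmt_0 (p : ℕ) (hp : p.Prime) (n : ℕ) (hn : 0 < n) :
    S n n ≡ p [MOD n] ↔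
      ∃ (s : ℕ) (Q : Finset ℕ),
        s ≤ 2 ∧
        (∀ q ∈ Q, Nat.Prime q ∧ q ≠ p) ∧
        n = p ^ s * ∏ q ∈ Q, q ∧
        (∀ q ∈ Q, (q - 1) ∣ n ∧ q ∣ (n / q + p)) ∧
        (s = 1 → ¬ (p - 1) ∣ n) ∧
        (s = 2 → (p - 1) ∣ n ∧ p ∣ (n / p ^ 2 + 1)) := by
  have hn0 := hn.ne'
  have hp_pow_dvd : ∀ {k}, p ^ k ∣ n ↔ k ≤ n.factorization p :=
    hp.pow_dvd_iff_le_factorization hn0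
  have hndvd : ∀ {q}, q.Prime → q ≠ p → ¬q ∣ p := fun hq hqp =>
    (Nat.prime_dvd_prime_iff_eq hq hp).not.mpr hqp
  constructor
  · intro H
    have hQ : ∀ q ∈ n.primeFactors.erase p, q.Prime ∧ q ≠ p := fun q hq =>
      ⟨Nat.prime_of_mem_primeFactors (mem_of_mem_erase hq), ne_of_mem_erase hq⟩
    refine ⟨n.factorization p, n.primeFactors.erase p, ?_, hQ, ?_, fun q hq => ?_, fun hs => ?_,
      fun hs => ?_⟩
    · by_contra! h3
      exact not_pow_three_dvd_of_S_self_modEq hp hn0 H (hp_pow_dvd.mpr h3)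
    · exact Nat.eq_pow_factorization_mul_prod_primeFactors_erase hn0 fun q hq hqp =>
        not_sq_dvd_of_S_self_modEq hq hn0 (hndvd hq hqp) H
    · have hqn := Nat.dvd_of_mem_primeFactors (mem_of_mem_erase hq)
      exact (S_self_modEq_iff_of_not_dvd (hQ q hq).1 hn0 hqn (hndvd (hQ q hq).1 (hQ q hq).2)).mp
        (H.of_dvd hqn)
    · have hpn : p ∣ n := pow_one p ▸ hp_pow_dvd.mpr hs.ge
      intro hp1
      have := hp_pow_dvd.mp ((S_self_modEq_self_iff hp hn0 hpn).mp (H.of_dvd hpn) hp1)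
      omega
    · have hpn : p ^ 2 ∣ n := hp_pow_dvd.mpr hs.ge
      exact (S_self_modEq_iff_of_sq_dvd hp hn0 hpn).mp (H.of_dvd hpn)
  · rintro ⟨s, Q, hs, hQ, hprod, hQn, hs1, hs2⟩
    have hps : S n n ≡ p [MOD p ^ s] := by
      interval_cases s
      · simpa using Nat.modEq_one
      · have hpn : p ∣ n := by rw [hprod, pow_one]; exact dvd_mul_right _ _
        rw [pow_one]
        exact (S_self_modEq_self_iff hp hn0 hpn).mpr fun hp1 => absurd hp1 (hs1 rfl)
      · exact (S_self_modEq_iff_of_sq_dvd hp hn0 (hprod ▸ dvd_mul_right _ _)).mpr (hs2 rfl)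
    have hqs : ∀ q ∈ Q, S n n ≡ p [MOD q] := fun q hq => by
      obtain ⟨hq', hqp⟩ := hQ q hq
      have hqn : q ∣ n := hprod ▸ (dvd_prod_of_mem _ hq).mul_left _
      exact (S_self_modEq_iff_of_not_dvd hq' hn0 hqn (hndvd hq' hqp)).mpr (hQn q hq)
    have hpQ := Nat.ModEq.pow_mul_prod_primes hp hQ hps hqs
    rwa [← hprod] at hpQ
end

section
/- Let 𝒫 be a non-empty set of prime numbers such that (i) for every p ∈ 𝒫, p − 1 is squarefree, and (ii) for every p ∈ 𝒫, every prime divisor q of p − 1 also belongs to 𝒫. Then 𝒫 is one of the sets {2}, {2,3}, {2,3,7}, or {2,3,7,43}. -/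
set_option maxRecDepth 10000 in
lemma divisors_1806 (m : ℕ) (h : m ∈ Nat.divisors 1806) :
    m = 1 ∨ m = 2 ∨ m = 3 ∨ m = 6 ∨ m = 7 ∨ m = 14 ∨ m = 21 ∨ m = 42 ∨ m = 43 ∨
    m = 86 ∨ m = 129 ∨ m = 258 ∨ m = 301 ∨ m = 602 ∨ m = 903 ∨ m = 1806 := by
  have : Nat.divisors 1806 = ({1,2,3,6,7,14,21,42,43,86,129,258,301,602,903,1806} : Finset ℕ) := by decide
  rw [this] at h
  simp only [Finset.mem_insert, Finset.mem_singleton] at h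
  tauto

set_option maxRecDepth 10000 in
/-- Lemma on sets of primes `𝒫` such that `p - 1` is squarefree for every `p ∈ 𝒫`
and every prime divisor of `p - 1` is again in `𝒫`. -/
theorem stmt_1 (P : Set ℕ) (hne : P.Nonempty) (hprime : ∀ p ∈ P, Nat.Prime p)
    (h1 : ∀ p ∈ P, Squarefree (p - 1))
    (h2 : ∀ p ∈ P, ∀ q : ℕ, Nat.Prime q → q ∣ p - 1 → q ∈ P) :
    P = {2} ∨ P = {2, 3} ∨ P = {2, 3, 7} ∨ P = {2, 3, 7, 43} := by
  have key : ∀ p, p ∈ P → p = 2 ∨ p = 3 ∨ p = 7 ∨ p = 43 := by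
    intro p
    induction p using Nat.strong_induction_on with
    | _ p ih =>
      intro hp
      have hpp := hprime p hp
      have h2le := hpp.two_le
      have hsq := h1 p hp
      have hdvd : p - 1 ∣ 1806 := by
        have hprod : (p - 1).primeFactors.prod id = p - 1 :=
          Nat.prod_primeFactors_of_squarefree hsq
        rw [← hprod]
        apply Finset.prod_primes_dvd
        · intro q hq
          exact (Nat.prime_of_mem_primeFactors hq).prime
        · intro q hq
          have hqp := Nat.prime_of_mem_primeFactors hq
          have hqd := Nat.dvd_of_mem_primeFactors hq
          have hqP := h2 p hp q hqp hqd
          have hlt : q < p := by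
            have := Nat.le_of_dvd (by omega) hqd
            omega
          rcases ih q hlt hqP with h | h | h | h <;> subst h <;> norm_num
      have hmem : p - 1 ∈ Nat.divisors 1806 := Nat.mem_divisors.mpr ⟨hdvd, by norm_num⟩
      have hd := divisors_1806 _ hmem
      have hval : p = 2 ∨ p = 3 ∨ p = 4 ∨ p = 7 ∨ p = 8 ∨ p = 15 ∨ p = 22 ∨ p = 43 ∨
          p = 44 ∨ p = 87 ∨ p = 130 ∨ p = 259 ∨ p = 302 ∨ p = 603 ∨ p = 904 ∨ p = 1807 := by
        omega
      clear hmem hd hdvd hsq ih h2le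
      revert hpp
      rcases hval with h | h | h | h | h | h | h | h | h | h | h | h | h | h | h | h <;>
        subst h <;> norm_num
  have h2P : 2 ∈ P := by
    obtain ⟨p, hp⟩ := hne
    rcases key p hp with h | h | h | h <;> subst h
    · exact hp
    · exact h2 3 hp 2 Nat.prime_two (by norm_num)
    · exact h2 7 hp 2 Nat.prime_two (by norm_num)
    · exact h2 43 hp 2 Nat.prime_two (by norm_num)
  by_cases h43 : 43 ∈ P
  · have h7P : 7 ∈ P := h2 43 h43 7 (by norm_num) (by norm_num)
    have h3P : 3 ∈ P := h2 43 h43 3 (by norm_num) (by norm_num)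
    right; right; right
    ext x
    simp only [Set.mem_insert_iff, Set.mem_singleton_iff]
    constructor
    · intro hx; exact key x hx
    · rintro (rfl | rfl | rfl | rfl) <;> assumption
  · by_cases h7 : 7 ∈ P
    · have h3P : 3 ∈ P := h2 7 h7 3 (by norm_num) (by norm_num)
      right; right; left
      ext x
      simp only [Set.mem_insert_iff, Set.mem_singleton_iff]
      constructor
      · intro hx
        rcases key x hx with h | h | h | h
        · tauto
        · tauto
        · tauto
        · subst h; exact absurd hx h43
      · rintro (rfl | rfl | rfl) <;> assumption
    · by_cases h3 : 3 ∈ P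
      · right; left
        ext x
        simp only [Set.mem_insert_iff, Set.mem_singleton_iff]
        constructor
        · intro hx
          rcases key x hx with h | h | h | h
          · tauto
          · tauto
          · subst h; exact absurd hx h7
          · subst h; exact absurd hx h43
        · rintro (rfl | rfl) <;> assumption
      · left
        ext x
        simp only [Set.mem_singleton_iff]
        constructor
        · intro hx
          rcases key x hx with h | h | h | h
          · exact h
          · subst h; exact absurd hx h3
          · subst h; exact absurd hx h7
          · subst h; exact absurd hx h43
        · rintro rfl; exact h2P
end

section
/- Let 𝒩 be a set of positive integers ν such that (i) every ν ∈ 𝒩 is squarefree, and (ii) for every ν ∈ 𝒩 and every prime divisor p of ν, p − 1 divides ν. Then 𝒩 ⊆ {1, 2, 6, 42, 1806}. -/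
/-!
Every prime factor of `ν` lies in `{2, 3, 7, 43}`, by strong induction on the prime `p ∣ ν`:
`p - 1` divides `ν`, so it is squarefree with all prime factors smaller than `p`, hence in
`{2, 3, 7, 43}`; thus `p - 1 ∣ 2 · 3 · 7 · 43 = 1806`, and the only primes `p` with
`p - 1 ∣ 1806` are `2, 3, 7, 43` themselves (`1807 = 13 · 139`). So `ν ∣ 1806`, and among the
divisors of `1806` the condition `p - 1 ∣ ν` leaves only `1, 2, 6, 42, 1806`.
-/

theorem Squarefree.dvd_of_primeFactors_subset {n m : ℕ} (hn : Squarefree n)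
    (h : n.primeFactors ⊆ m.primeFactors) : n ∣ m := by
  rw [← Nat.prod_primeFactors_of_squarefree hn]
  exact (Finset.prod_dvd_prod_of_subset _ _ id h).trans (Nat.prod_primeFactors_dvd m)

lemma primeFactors_1806 : Nat.primeFactors 1806 = {2, 3, 7, 43} := by
  simp [Nat.primeFactors, Nat.primeFactorsList_ofNat]

lemma dvd_1806_of_prime_of_sub_one_dvd {p : ℕ} (hp : p.Prime) (h : p - 1 ∣ 1806) :
    p ∣ 1806 := by
  have key : ∀ d ∈ Nat.divisors 1806, (d + 1).Prime → d + 1 ∣ 1806 := by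
    simp only [Nat.divisors_ofNat]
    norm_num
  have hp1 : p - 1 + 1 = p := Nat.sub_add_cancel hp.one_lt.le
  simpa [hp1] using key (p - 1) (by simpa using h) (by rwa [hp1])

section

variable {ν : ℕ}

lemma primeFactors_subset_primeFactors_1806 (hsf : Squarefree ν)
    (h : ∀ p, p.Prime → p ∣ ν → p - 1 ∣ ν) : ν.primeFactors ⊆ Nat.primeFactors 1806 := by
  intro p
  induction p using Nat.strong_induction_on with
  | _ p ih =>
    intro hpν
    have hp : p.Prime := Nat.prime_of_mem_primeFactors hpν
    have hdvd : p - 1 ∣ ν := h p hp (Nat.dvd_of_mem_primeFactors hpν)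
    have hsub : (p - 1).primeFactors ⊆ Nat.primeFactors 1806 := fun q hq =>
      ih q ((Nat.le_of_mem_primeFactors hq).trans_lt (Nat.sub_lt hp.pos one_pos))
        (Nat.primeFactors_mono hdvd hsf.ne_zero hq)
    have h1806 : p - 1 ∣ 1806 := (hsf.squarefree_of_dvd hdvd).dvd_of_primeFactors_subset hsub
    exact Nat.mem_primeFactors.mpr ⟨hp, dvd_1806_of_prime_of_sub_one_dvd hp h1806, by norm_num⟩

lemma mem_of_dvd_1806 (hν : ν ∣ 1806) (h : ∀ p ∈ Nat.primeFactors 1806, p ∣ ν → p - 1 ∣ ν) :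
    ν ∈ ({1, 2, 6, 42, 1806} : Finset ℕ) := by
  rw [primeFactors_1806] at h
  have key : ∀ d ∈ Nat.divisors 1806, (∀ p ∈ ({2, 3, 7, 43} : Finset ℕ), p ∣ d → p - 1 ∣ d) →
      d ∈ ({1, 2, 6, 42, 1806} : Finset ℕ) := by
    simp only [Nat.divisors_ofNat]
    decide
  exact key ν (by simpa using hν) h

lemma mem_of_squarefree_of_sub_one_dvd (hsf : Squarefree ν)
    (h : ∀ p, p.Prime → p ∣ ν → p - 1 ∣ ν) : ν ∈ ({1, 2, 6, 42, 1806} : Finset ℕ) :=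
  mem_of_dvd_1806 (hsf.dvd_of_primeFactors_subset (primeFactors_subset_primeFactors_1806 hsf h))
    fun p hp => h p (Nat.prime_of_mem_primeFactors hp)

end

theorem stmt_2_general (N : Set ℕ)
    (h1 : ∀ ν ∈ N, Squarefree ν)
    (h2 : ∀ ν ∈ N, ∀ p : ℕ, Nat.Prime p → p ∣ ν → (p - 1) ∣ ν) :
    N ⊆ {1, 2, 6, 42, 1806} := fun ν hν => by
  simpa using mem_of_squarefree_of_sub_one_dvd (h1 ν hν) (h2 ν hν)

/-- Lemma on sets of squarefree positive integers `𝒩` such that `p - 1 ∣ ν`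
for every `ν ∈ 𝒩` and every prime divisor `p` of `ν`. -/
theorem stmt_2 (N : Set ℕ) (hpos : ∀ ν ∈ N, 0 < ν)
    (h1 : ∀ ν ∈ N, Squarefree ν)
    (h2 : ∀ ν ∈ N, ∀ p : ℕ, Nat.Prime p → p ∣ ν → (p - 1) ∣ ν) :
    N ⊆ {1, 2, 6, 42, 1806} :=
  stmt_2_general N h1 h2
end

section
/- Let p be a prime. Then M_p^(0) ⊆ {1, 2, 6, 42, 1806}; that is, every positive integer n not divisible by p satisfying S_n(n) ≡ p (mod n) belongs to {1, 2, 6, 42, 1806}. -/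
section aux

/-- Sum of `x^n` over `ZMod q`, `q` prime. -/
lemma aux_sum_pow (q : ℕ) [Fact q.Prime] {n : ℕ} (hn : n ≠ 0) :
    ∑ x : ZMod q, x ^ n = if (q - 1) ∣ n then -1 else 0 := by
  have hq1 : 1 < q := (Fact.out : q.Prime).one_lt
  split_ifs with h
  · obtain ⟨c, rfl⟩ := h
    have hstep : ∀ x : ZMod q, x ^ ((q - 1) * c) = if x = 0 then 0 else 1 := by
      intro x
      split_ifs with hx
      · subst hx
        rw [zero_pow hn]
      · rw [pow_mul, ZMod.pow_card_sub_one_eq_one hx, one_pow]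
    calc ∑ x : ZMod q, x ^ ((q - 1) * c)
        = ∑ x : ZMod q, ((1 : ZMod q) - if x = 0 then 1 else 0) := by
          refine Finset.sum_congr rfl fun x _ => ?_
          rw [hstep x]
          split_ifs <;> ring
      _ = (Fintype.card (ZMod q) : ZMod q) - 1 := by
          rw [Finset.sum_sub_distrib, Finset.sum_const, Finset.sum_ite_eq'
            Finset.univ (0 : ZMod q) (fun _ => (1 : ZMod q))]
          simp
      _ = -1 := by
          rw [ZMod.card, ZMod.natCast_self]; ring
  · have hb : n % (q - 1) < q - 1 := Nat.mod_lt _ (by omega)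
    have hb0 : n % (q - 1) ≠ 0 := fun h0 => h (Nat.dvd_of_mod_eq_zero h0)
    have hred : ∀ x : ZMod q, x ^ n = x ^ (n % (q - 1)) := by
      intro x
      by_cases hx : x = 0
      · subst hx; rw [zero_pow hn, zero_pow hb0]
      · conv_lhs => rw [← Nat.div_add_mod n (q - 1)]
        rw [pow_add, pow_mul, ZMod.pow_card_sub_one_eq_one hx, one_pow, one_mul]
    rw [Finset.sum_congr rfl fun x _ => hred x]
    exact FiniteField.sum_pow_lt_card_sub_one (K := ZMod q) (n % (q - 1)) (by rwa [ZMod.card])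

/-- Sum over `range q` equals sum over `ZMod q`. -/
lemma aux_sum_range (q : ℕ) [NeZero q] (f : ZMod q → ZMod q) :
    ∑ i ∈ Finset.range q, f (i : ℕ) = ∑ x : ZMod q, f x := by
  refine Finset.sum_nbij' (fun i => ((i : ℕ) : ZMod q)) (fun x => x.val) ?_ ?_ ?_ ?_ ?_
  · intro a _; exact Finset.mem_univ _
  · intro x _; exact Finset.mem_range.mpr (ZMod.val_lt x)
  · intro a ha; exact ZMod.val_cast_of_lt (Finset.mem_range.mp ha)
  · intro x _; exact ZMod.natCast_rightInverse x
  · intro a _; rfl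

/-- Periodic splitting of the sum. -/
lemma aux_periodic (q : ℕ) (n m : ℕ) :
    ∑ i ∈ Finset.range (q * m), ((i : ZMod q)) ^ n
      = (m : ZMod q) * ∑ i ∈ Finset.range q, (i : ZMod q) ^ n := by
  induction m with
  | zero => simp
  | succ m ih =>
    rw [Nat.mul_succ, Finset.sum_range_add, ih]
    have : ∀ i ∈ Finset.range q, ((q * m + i : ℕ) : ZMod q) ^ n = ((i : ℕ) : ZMod q) ^ n := by
      intro i _
      congr 1
      push_cast
      simp [ZMod.natCast_self]
    rw [Finset.sum_congr rfl this]
    push_cast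
    ring

/-- The key local condition at each prime divisor. -/
lemma aux_key (p q n : ℕ) (hp : p.Prime) (hq : q.Prime) (hqn : q ∣ n) (hn : 0 < n)
    (hpn : ¬ p ∣ n) (h : S n n ≡ p [MOD n]) : (q - 1) ∣ n ∧ ¬ q * q ∣ n := by
  haveI : Fact q.Prime := ⟨hq⟩
  haveI : NeZero q := ⟨hq.pos.ne'⟩
  obtain ⟨m, hm⟩ := hqn
  have hq' : S n n ≡ p [MOD q] := h.of_dvd ⟨m, hm⟩
  have hcast : ((S n n : ℕ) : ZMod q) = (p : ZMod q) :=
    (ZMod.natCast_eq_natCast_iff _ _ _).mpr hq'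
  have hS : ((S n n : ℕ) : ZMod q)
      = (m : ZMod q) * (if (q - 1) ∣ n then -1 else 0) := by
    have h1 : ((S n n : ℕ) : ZMod q) = ∑ i ∈ Finset.range n, ((1 + i : ℕ) : ZMod q) ^ n := by
      rw [S, Nat.cast_sum]
      rw [show Finset.Icc 1 n = Finset.Ico 1 (n + 1) by rfl, Finset.sum_Ico_eq_sum_range]
      simp
    have h3 : ∑ i ∈ Finset.range n, ((1 + i : ℕ) : ZMod q) ^ n
        = ∑ i ∈ Finset.range n, ((i : ℕ) : ZMod q) ^ n := by
      have e1 : ∑ i ∈ Finset.range (n + 1), ((i : ℕ) : ZMod q) ^ n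
          = ∑ i ∈ Finset.range n, ((i : ℕ) : ZMod q) ^ n + ((n : ℕ) : ZMod q) ^ n :=
        Finset.sum_range_succ _ n
      have e2 : ∑ i ∈ Finset.range (n + 1), ((i : ℕ) : ZMod q) ^ n
          = ∑ i ∈ Finset.range n, ((i + 1 : ℕ) : ZMod q) ^ n + ((0 : ℕ) : ZMod q) ^ n :=
        Finset.sum_range_succ' _ n
      have hzero : ((n : ℕ) : ZMod q) ^ n = ((0 : ℕ) : ZMod q) ^ n := by
        rw [show ((n : ℕ) : ZMod q) = 0 from
          (ZMod.natCast_eq_zero_iff n q).mpr ⟨m, hm⟩]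
        simp
      have e4 : ∑ i ∈ Finset.range n, ((1 + i : ℕ) : ZMod q) ^ n
          = ∑ i ∈ Finset.range n, ((i + 1 : ℕ) : ZMod q) ^ n := by
        refine Finset.sum_congr rfl fun i _ => ?_
        rw [Nat.add_comm]
      rw [hzero] at e1
      rw [e4]
      exact add_right_cancel (e2.symm.trans e1)
    rw [h1, h3, hm, aux_periodic q (q * m) m, aux_sum_range q (fun x => x ^ (q * m)),
      aux_sum_pow q (show q * m ≠ 0 by omega)]
  have hp0 : (p : ZMod q) ≠ 0 := by
    intro h0
    have : q ∣ p := (ZMod.natCast_eq_zero_iff p q).mp h0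
    have : q = p := (Nat.prime_dvd_prime_iff_eq hq hp).mp this
    exact hpn (this ▸ ⟨m, hm⟩)
  rw [hS] at hcast
  by_cases hd : (q - 1) ∣ n
  · refine ⟨hd, fun hqq => ?_⟩
    have hqm : q ∣ m := (mul_dvd_mul_iff_left hq.pos.ne').mp (hm ▸ hqq)
    have : (m : ZMod q) = 0 := (ZMod.natCast_eq_zero_iff m q).mpr hqm
    rw [if_pos hd, this, zero_mul] at hcast
    exact hp0 hcast.symm
  · rw [if_neg hd, mul_zero] at hcast
    exact absurd hcast.symm hp0

/-- Enumeration of divisors of 1806. -/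
lemma aux_divisors {d : ℕ} (h : d ∣ 1806) :
    d = 1 ∨ d = 2 ∨ d = 3 ∨ d = 6 ∨ d = 7 ∨ d = 14 ∨ d = 21 ∨ d = 42 ∨ d = 43 ∨
    d = 86 ∨ d = 129 ∨ d = 258 ∨ d = 301 ∨ d = 602 ∨ d = 903 ∨ d = 1806 := by
  rw [show (1806 : ℕ) = 2 * (3 * (7 * 43)) by norm_num] at h
  obtain ⟨a, e, ha, he, rfl⟩ := exists_dvd_and_dvd_of_dvd_mul h
  obtain ⟨b, e2, hb, he2, rfl⟩ := exists_dvd_and_dvd_of_dvd_mul he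
  obtain ⟨c, f, hc, hf, rfl⟩ := exists_dvd_and_dvd_of_dvd_mul he2
  have ha' := Nat.prime_two.eq_one_or_self_of_dvd a ha
  have hb' := Nat.prime_three.eq_one_or_self_of_dvd b hb
  have hc' := (show Nat.Prime 7 by norm_num).eq_one_or_self_of_dvd c hc
  have hf' := (show Nat.Prime 43 by norm_num).eq_one_or_self_of_dvd f hf
  rcases ha' with rfl | rfl <;> rcases hb' with rfl | rfl <;> rcases hc' with rfl | rfl <;>
    rcases hf' with rfl | rfl <;> norm_num

end aux

/-- For a prime `p`, `M_p^(0) ⊆ {1, 2, 6, 42, 1806}`. -/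
theorem stmt_3 (p : ℕ) (hp : p.Prime) (n : ℕ) (hn : 0 < n) (hpn : ¬ p ∣ n)
    (h : S n n ≡ p [MOD n]) : n ∈ ({1, 2, 6, 42, 1806} : Set ℕ) := by
  have key : ∀ q, q.Prime → q ∣ n → (q - 1) ∣ n ∧ ¬ q * q ∣ n :=
    fun q hq hqn => aux_key p q n hp hq hqn hn hpn h
  have hsf : Squarefree n := Nat.squarefree_iff_prime_squarefree.mpr
    fun x hx hxx => (key x hx ((dvd_mul_right x x).trans hxx)).2 hxx
  have hdvd1806 : ∀ q, q.Prime → q ∣ n → q ∣ 1806 := by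
    intro q
    induction q using Nat.strong_induction_on with
    | _ q ih =>
    intro hq hqn
    have hq2 := hq.two_le
    have hd := (key q hq hqn).1
    have hsq1 : Squarefree (q - 1) := Squarefree.squarefree_of_dvd hd hsf
    have h1806 : (q - 1) ∣ 1806 := by
      rw [← Nat.prod_primeFactors_of_squarefree hsq1]
      refine Finset.prod_primes_dvd _
        (fun r hr => (Nat.prime_of_mem_primeFactors hr).prime) (fun r hr => ?_)
      have hrp := Nat.prime_of_mem_primeFactors hr
      have hrq1 : r ∣ (q - 1) := Nat.dvd_of_mem_primeFactors hr
      have hrlt : r < q := lt_of_le_of_lt (Nat.le_of_dvd (by omega) hrq1) (by omega)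
      exact ih r hrlt hrp (hrq1.trans hd)
    have := aux_divisors h1806
    -- q = (q-1)+1 is prime; eliminate the non-prime candidates
    rcases this with h' | h' | h' | h' | h' | h' | h' | h' | h' | h' | h' | h' | h' | h' | h' | h' <;>
      [ (have : q = 2 := by omega); (have : q = 3 := by omega); (have : q = 4 := by omega);
        (have : q = 7 := by omega); (have : q = 8 := by omega); (have : q = 15 := by omega);
        (have : q = 22 := by omega); (have : q = 43 := by omega); (have : q = 44 := by omega);
        (have : q = 87 := by omega); (have : q = 130 := by omega); (have : q = 259 := by omega);
        (have : q = 302 := by omega); (have : q = 603 := by omega); (have : q = 904 := by omega);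
        (have : q = 1807 := by omega)] <;>
      subst this <;> first
        | decide
        | exact absurd hq (by norm_num)
  have hn1806 : n ∣ 1806 := by
    rw [← Nat.prod_primeFactors_of_squarefree hsf]
    exact Finset.prod_primes_dvd _
      (fun r hr => (Nat.prime_of_mem_primeFactors hr).prime)
      (fun r hr => hdvd1806 r (Nat.prime_of_mem_primeFactors hr)
        (Nat.dvd_of_mem_primeFactors hr))
  rcases aux_divisors hn1806 with rfl | rfl | rfl | rfl | rfl | rfl | rfl | rfl | rfl | rfl | rfl | rfl | rfl | rfl | rfl | rfl
  · simp
  · simp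
  · exact absurd (key 3 (by norm_num) (by norm_num)).1 (by norm_num)
  · simp
  · exact absurd (key 7 (by norm_num) (by norm_num)).1 (by norm_num)
  · exact absurd (key 7 (by norm_num) (by norm_num)).1 (by norm_num)
  · exact absurd (key 7 (by norm_num) (by norm_num)).1 (by norm_num)
  · simp
  · exact absurd (key 43 (by norm_num) (by norm_num)).1 (by norm_num)
  · exact absurd (key 43 (by norm_num) (by norm_num)).1 (by norm_num)
  · exact absurd (key 43 (by norm_num) (by norm_num)).1 (by norm_num)
  · exact absurd (key 43 (by norm_num) (by norm_num)).1 (by norm_num)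
  · exact absurd (key 43 (by norm_num) (by norm_num)).1 (by norm_num)
  · exact absurd (key 43 (by norm_num) (by norm_num)).1 (by norm_num)
  · exact absurd (key 43 (by norm_num) (by norm_num)).1 (by norm_num)
  · simp
end

section
/- Let p be a prime with p ∉ {2, 3, 7, 43}. Then M_p^(2) is empty; that is, there is no positive integer n divisible by p² but not p³ with S_n(n) ≡ p (mod n). -/
/-!
Reducing modulo a divisor `d` of `n` gives `S_n(n) ≡ (n / d) · ∑_{x ∈ ℤ/d} x ^ n (mod d)`, and
for a prime `q` with `q - 1 ∤ n` the sum over `ℤ/q^k` vanishes, because multiplying by a unit `u`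
with `u ^ n - 1` a unit permutes the summands. Taking `d = p²` forces `p - 1 ∣ n`; taking `d = q`
for another prime `q ∣ n` forces `q - 1 ∣ n` and `q² ∤ n`. By strong induction every prime `q ≤ p`
with `q - 1 ∣ n` then has `q - 1` squarefree with all its prime factors in `{2, 3, 7, 43}`, so
`q - 1 ∣ 1806 = 2 · 3 · 7 · 43`, which leaves only `q ∈ {2, 3, 7, 43}` (`1807 = 13 · 139`).
-/

open Finset

theorem sum_pow_eq_zero_of_isUnit_pow_sub_one {R : Type*} [CommRing R] [Fintype R] {u : R}
    (hu : IsUnit u) {k : ℕ} (h : IsUnit (u ^ k - 1)) : ∑ x : R, x ^ k = 0 := by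
  have hscale : ∑ x : R, (u * x) ^ k = ∑ x : R, x ^ k :=
    Fintype.sum_bijective _ hu.unit.mulLeft_bijective _ _ fun _ => rfl
  refine h.mul_right_eq_zero.1 ?_
  rw [sub_mul, one_mul, mul_sum, sub_eq_zero, ← hscale]
  simp only [mul_pow]

namespace ZMod

theorem sum_range_natCast_s7 {M : Type*} [AddCommMonoid M] (d : ℕ) [NeZero d] (f : ZMod d → M) :
    ∑ i ∈ range d, f i = ∑ x : ZMod d, f x :=
  sum_nbij' (↑) val (fun _ _ => mem_univ _) (fun x _ => mem_range.2 x.val_lt)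
    (fun _ hi => val_cast_of_lt (mem_range.1 hi)) (fun x _ => natCast_zmod_val x) fun _ _ => rfl

theorem sum_range_mul_natCast {M : Type*} [AddCommMonoid M] (d : ℕ) [NeZero d] (f : ZMod d → M)
    (m : ℕ) : ∑ i ∈ range (d * m), f i = m • ∑ x : ZMod d, f x := by
  induction m with
  | zero => simp
  | succ m ih =>
    simp only [Nat.mul_succ, sum_range_add, ih, Nat.cast_add, Nat.cast_mul, natCast_self,
      zero_mul, zero_add, sum_range_natCast_s7, succ_nsmul]

theorem sum_Icc_one_natCast {M : Type*} [AddCancelCommMonoid M] {d n : ℕ} (f : ZMod d → M)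
    (hd : d ∣ n) : ∑ i ∈ Icc 1 n, f i = ∑ i ∈ range n, f i := by
  have hn : ((n : ℕ) : ZMod d) = 0 := (natCast_eq_zero_iff _ _).2 hd
  have hshift := (sum_range_succ (fun i : ℕ => f i) n).symm.trans (sum_range_succ' _ n)
  rw [hn, Nat.cast_zero] at hshift
  rw [← Ico_add_one_right_eq_Icc, sum_Ico_eq_sum_range, add_tsub_cancel_right]
  simp only [add_comm 1]
  exact (add_right_cancel hshift).symm

theorem isUnit_iff_castHom_ne_zero {q k : ℕ} (hq : q.Prime) (hk : k ≠ 0) (x : ZMod (q ^ k)) :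
    IsUnit x ↔ castHom (dvd_pow_self q hk) (ZMod q) x ≠ 0 := by
  have : NeZero (q ^ k) := ⟨pow_ne_zero k hq.ne_zero⟩
  rw [← natCast_zmod_val x, isUnit_natCast_iff_not_dvd_pow hq (Nat.pos_of_ne_zero hk),
    map_natCast, Ne, natCast_eq_zero_iff]

theorem exists_unit_pow_ne_one {q n : ℕ} [Fact q.Prime] (h : ¬ q - 1 ∣ n) :
    ∃ u : (ZMod q)ˣ, u ^ n ≠ 1 := by
  by_contra! hall
  refine h ?_
  rw [← card_units q, ← Nat.card_eq_fintype_card, ← IsCyclic.exponent_eq_card]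
  exact Monoid.exponent_dvd_iff_forall_pow_eq_one.2 hall

theorem sum_pow_eq_zero_of_not_sub_one_dvd {q n : ℕ} [Fact q.Prime] (h : ¬ q - 1 ∣ n) :
    ∑ x : ZMod q, x ^ n = 0 := by
  obtain ⟨u, hu⟩ := exists_unit_pow_ne_one h
  refine sum_pow_eq_zero_of_isUnit_pow_sub_one u.isUnit (sub_ne_zero.2 ?_).isUnit
  simpa [← Units.val_pow_eq_pow_val, Units.val_eq_one] using hu

theorem sum_pow_prime_pow_eq_zero_of_not_sub_one_dvd {q k n : ℕ} (hq : q.Prime) (hk : k ≠ 0)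
    [NeZero (q ^ k)] (h : ¬ q - 1 ∣ n) : ∑ x : ZMod (q ^ k), x ^ n = 0 := by
  have : Fact q.Prime := ⟨hq⟩
  obtain ⟨u, hu⟩ := exists_unit_pow_ne_one h
  obtain ⟨v, hv⟩ := castHom_surjective (dvd_pow_self q hk) (u : ZMod q)
  refine sum_pow_eq_zero_of_isUnit_pow_sub_one (u := v) ?_ ?_
  · rw [isUnit_iff_castHom_ne_zero hq hk, hv]
    exact u.ne_zero
  · rw [isUnit_iff_castHom_ne_zero hq hk, map_sub, map_pow, map_one, hv, sub_ne_zero]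
    simpa [← Units.val_pow_eq_pow_val, Units.val_eq_one] using hu

end ZMod

theorem natCast_S_eq_mul_sum {d n : ℕ} [NeZero d] (k : ℕ) (hd : d ∣ n) :
    ((S k n : ℕ) : ZMod d) = ((n / d : ℕ) : ZMod d) * ∑ x : ZMod d, x ^ k := by
  have hsum := ZMod.sum_range_mul_natCast d (· ^ k) (n / d)
  rw [Nat.mul_div_cancel' hd] at hsum
  rw [S]
  push_cast
  rw [ZMod.sum_Icc_one_natCast (· ^ k) hd, hsum, nsmul_eq_mul]

section

variable {n p : ℕ}

theorem mul_sum_pow_eq_of_S_modEq (hS : S n n ≡ p [MOD n]) {d : ℕ} [NeZero d] (hd : d ∣ n) :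
    ((n / d : ℕ) : ZMod d) * ∑ x : ZMod d, x ^ n = p := by
  rw [← natCast_S_eq_mul_sum n hd]
  exact (ZMod.natCast_eq_natCast_iff _ _ _).2 (hS.of_dvd hd)

theorem sub_one_dvd_and_not_sq_dvd_of_S_modEq (hS : S n n ≡ p [MOD n]) (hp : p.Prime) {q : ℕ}
    (hq : q.Prime) (hqn : q ∣ n) (hqp : q ≠ p) : q - 1 ∣ n ∧ ¬ q ^ 2 ∣ n := by
  have : Fact q.Prime := ⟨hq⟩
  have key := mul_sum_pow_eq_of_S_modEq hS hqn
  have hp0 : (p : ZMod q) ≠ 0 := by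
    rw [Ne, ZMod.natCast_eq_zero_iff]
    exact mt (Nat.prime_dvd_prime_iff_eq hq hp).1 hqp
  constructor
  · by_contra h
    exact hp0 (by rw [← key, ZMod.sum_pow_eq_zero_of_not_sub_one_dvd h, mul_zero])
  · intro hq2
    have : q ∣ n / q := Nat.dvd_div_of_mul_dvd (by rwa [← sq])
    rw [(ZMod.natCast_eq_zero_iff _ _).2 this, zero_mul] at key
    exact hp0 key.symm

theorem sub_one_dvd_of_S_modEq (hS : S n n ≡ p [MOD n]) (hp : p.Prime) (hp2 : p ^ 2 ∣ n) :
    p - 1 ∣ n := by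
  by_contra h
  have : NeZero (p ^ 2) := ⟨pow_ne_zero 2 hp.ne_zero⟩
  have key := mul_sum_pow_eq_of_S_modEq hS hp2
  rw [ZMod.sum_pow_prime_pow_eq_zero_of_not_sub_one_dvd hp two_ne_zero h, mul_zero, eq_comm,
    ZMod.natCast_eq_zero_iff] at key
  exact absurd (Nat.le_of_dvd hp.pos key) (by nlinarith [hp.two_le])

end

theorem dvd_1806_of_squarefree {m : ℕ} (hm : Squarefree m)
    (h : m.primeFactors ⊆ {2, 3, 7, 43}) : m ∣ 1806 := by
  rw [← Nat.prod_primeFactors_of_squarefree hm]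
  exact prod_dvd_prod_of_subset _ _ id h

theorem mem_of_sub_one_dvd_1806 {q : ℕ} (hq : q.Prime) (h : q - 1 ∣ 1806) :
    q ∈ ({2, 3, 7, 43} : Finset ℕ) := by
  obtain ⟨d, rfl⟩ : ∃ d, q = d + 1 := ⟨q - 1, by have := hq.two_le; omega⟩
  have hd : d ∈ Nat.divisors 1806 := Nat.mem_divisors.2 ⟨by simpa using h, by norm_num⟩
  simp only [Nat.divisors_ofNat, mem_insert, mem_singleton] at hd
  rcases hd with rfl | rfl | rfl | rfl | rfl | rfl | rfl | rfl | rfl | rfl | rfl | rfl | rfl |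
    rfl | rfl | rfl <;> first | decide | norm_num at hq

theorem prime_mem_of_sub_one_dvd {n p : ℕ}
    (hsmall : ∀ q, q.Prime → q < p → q ∣ n → q - 1 ∣ n ∧ ¬ q ^ 2 ∣ n) :
    ∀ q, q.Prime → q ≤ p → q - 1 ∣ n → q ∈ ({2, 3, 7, 43} : Finset ℕ) := by
  intro q
  induction q using Nat.strong_induction_on with
  | _ q ih =>
    intro hq hqp hqn
    have hq1 : 0 < q - 1 := by have := hq.two_le; omega
    have hlt : ∀ r, r ∣ q - 1 → r < q := fun r hr => by have := Nat.le_of_dvd hq1 hr; omega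
    refine mem_of_sub_one_dvd_1806 hq (dvd_1806_of_squarefree ?_ fun r hr => ?_)
    · refine Nat.squarefree_iff_prime_squarefree.2 fun r hr hrr => ?_
      have hrq := hlt r (dvd_of_mul_left_dvd hrr)
      exact (hsmall r hr (by omega) ((dvd_of_mul_left_dvd hrr).trans hqn)).2
        (by rw [sq]; exact hrr.trans hqn)
    · obtain ⟨hr, hrd, -⟩ := Nat.mem_primeFactors.1 hr
      have hrq := hlt r hrd
      exact ih r hrq hr (by omega) (hsmall r hr (by omega) (hrd.trans hqn)).1

/-- For a prime `p ∉ {2, 3, 7, 43}`, the set `M_p^(2)` is empty. -/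
theorem stmt_7 (p : ℕ) (hp : p.Prime) (hne : p ∉ ({2, 3, 7, 43} : Set ℕ)) :
    ¬ ∃ n : ℕ, 0 < n ∧ p ^ 2 ∣ n ∧ ¬ p ^ 3 ∣ n ∧ S n n ≡ p [MOD n] := by
  rintro ⟨n, -, hp2, -, hS⟩
  have hsmall : ∀ q, q.Prime → q < p → q ∣ n → q - 1 ∣ n ∧ ¬ q ^ 2 ∣ n :=
    fun q hq hqp hqn => sub_one_dvd_and_not_sq_dvd_of_S_modEq hS hp hq hqn hqp.ne
  have hp_mem := prime_mem_of_sub_one_dvd hsmall p hp le_rfl (sub_one_dvd_of_S_modEq hS hp hp2)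
  exact hne (by simpa using hp_mem)
end

section
/- Let p be a prime with p ∉ {2, 3, 7, 43} and let n be a positive integer divisible by p. Then n ∈ M_p^(1) if and only if n/p is a weak primary pseudoperfect number, 𝔫_{n/p} divides p, and 𝔫_{n/p} − 1 does not divide n/p. -/
/-- The set `𝒲` of weak primary pseudoperfect numbers: positive integers `n` with
`∑_{p ∣ n, p prime} n/p + 1 ≡ 0 (mod n)`. -/
def W : Set ℕ := {n : ℕ | 0 < n ∧ n ∣ (∑ q ∈ n.primeFactors, n / q) + 1}

/-- `𝔫_Q := lcm{(p-1)/gcd(p-1,Q) : p prime, p ∣ Q}` for `Q ≠ 1`, and `𝔫_1 := 1`. -/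
def frakn (Q : ℕ) : ℕ :=
  if Q = 1 then 1 else Q.primeFactors.lcm fun q => (q - 1) / Nat.gcd (q - 1) Q

/-!
Modulo a prime power `q ^ e ∣ n`, the sum `S n n` is `n / q ^ e` copies of `∑ x mod q ^ e, x ^ n`.
Non-units contribute nothing, and the `n`-th powers of the units sum to `φ (q ^ e)` when `q - 1 ∣ n`
and to `0` otherwise (multiplying by a unit `v` with `v ^ n - 1` invertible permutes the terms).
Hence `S n n ≡ -∑_{q ∣ n, q - 1 ∣ n} n / q (mod n)`, and for `n = p * m` the congruence
`S n n ≡ p` says `p * m ∣ ∑_{q ∣ p * m, q - 1 ∣ p * m} p * m / q + p`. Reading this modulo each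
prime of `n`, it forces `p ∤ m`, `p - 1 ∤ p * m` and `q - 1 ∣ p * m` for the primes `q ∣ m`; then
it is exactly `m ∈ W`, and the last divisibilities say `𝔫_m ∣ p`. The exceptional primes appear
when `𝔫_m = 1`: then `q - 1 ∣ m` for every prime `q ∣ m`, which for squarefree `m` forces
`m ∣ 1806 = 2 * 3 * 7 * 43` (induction on `q`).
-/

open Finset

theorem sum_units_pow_eq_zero_of_isUnit_sub_one {R : Type*} [CommRing R] [Fintype Rˣ] {n : ℕ}
    (v : Rˣ) (hv : IsUnit ((v : R) ^ n - 1)) : ∑ u : Rˣ, (u : R) ^ n = 0 := by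
  have hshift : (∑ u : Rˣ, (u : R) ^ n) * (v : R) ^ n = ∑ u : Rˣ, (u : R) ^ n := by
    simp_rw [sum_mul, ← mul_pow, ← Units.val_mul]
    exact Fintype.sum_equiv (Equiv.mulRight v) _ _ fun _ => rfl
  rw [← hv.mul_left_eq_zero, mul_sub, mul_one, hshift, sub_self]

namespace ZMod

theorem sum_units_pow_of_totient_dvd {M n : ℕ} [NeZero M] (h : M.totient ∣ n) :
    ∑ u : (ZMod M)ˣ, (u : ZMod M) ^ n = M.totient := by
  obtain ⟨k, rfl⟩ := h
  simp_rw [← Units.val_pow_eq_pow_val, pow_mul, ZMod.pow_totient, one_pow, Units.val_one,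
    sum_const, card_univ, ZMod.card_units_eq_totient, nsmul_one]

variable {q : ℕ} [hq : Fact q.Prime] {e : ℕ}

theorem isUnit_prime_pow_iff (he : e ≠ 0) (x : ZMod (q ^ e)) :
    IsUnit x ↔ ¬ q ∣ x.val := by
  rw [← ZMod.natCast_zmod_val x, ZMod.isUnit_iff_coprime, ZMod.val_natCast_of_lt (ZMod.val_lt x),
    Nat.coprime_pow_right_iff (Nat.pos_of_ne_zero he), Nat.coprime_comm,
    hq.out.coprime_iff_not_dvd]

theorem pow_eq_zero_of_not_isUnit (he : e ≠ 0) {n : ℕ} (hen : e ≤ n)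
    {x : ZMod (q ^ e)} (hx : ¬ IsUnit x) : x ^ n = 0 := by
  obtain ⟨c, hc⟩ := not_not.1 ((isUnit_prime_pow_iff he x).not.1 hx)
  rw [← ZMod.natCast_zmod_val x, hc, ← Nat.cast_pow, ZMod.natCast_eq_zero_iff, mul_pow]
  exact (pow_dvd_pow q hen).mul_right _

theorem sum_pow_eq_sum_units_pow (he : e ≠ 0) {n : ℕ} (hen : e ≤ n) :
    ∑ x : ZMod (q ^ e), x ^ n = ∑ u : (ZMod (q ^ e))ˣ, (u : ZMod (q ^ e)) ^ n := by
  have hunits : (univ.filter IsUnit : Finset (ZMod (q ^ e))) =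
      univ.map ⟨Units.val, Units.val_injective⟩ := by
    ext x; simp [IsUnit]
  rw [← sum_filter_add_sum_filter_not univ IsUnit, hunits, sum_map,
    sum_eq_zero fun x hx => pow_eq_zero_of_not_isUnit he hen (mem_filter.1 hx).2, add_zero]
  rfl

theorem exists_isUnit_pow_sub_one (he : e ≠ 0) {n : ℕ} (h : ¬ q - 1 ∣ n) :
    ∃ v : (ZMod (q ^ e))ˣ, IsUnit ((v : ZMod (q ^ e)) ^ n - 1) := by
  obtain ⟨g, hg⟩ : ∃ g : (ZMod q)ˣ, g ^ n ≠ 1 := by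
    contrapose! h
    rw [← ZMod.card_units q, ← Nat.card_eq_fintype_card, ← IsCyclic.exponent_eq_card]
    exact Monoid.exponent_dvd_of_forall_pow_eq_one h
  have hqe : q ∣ q ^ e := dvd_pow_self q he
  obtain ⟨v, rfl⟩ := ZMod.unitsMap_surjective hqe g
  refine ⟨v, (isUnit_prime_pow_iff he _).2 fun hdvd => hg (Units.ext ?_)⟩
  rw [← ZMod.natCast_eq_zero_iff, ZMod.natCast_val, ← ZMod.castHom_apply (h := hqe),
    map_sub, map_pow, map_one, sub_eq_zero] at hdvd
  rwa [Units.val_pow_eq_pow_val, ZMod.unitsMap_val, Units.val_one, ← ZMod.castHom_apply]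

theorem sum_units_pow_prime_pow_eq_zero (he : e ≠ 0) {n : ℕ} (h : ¬ q - 1 ∣ n) :
    ∑ u : (ZMod (q ^ e))ˣ, (u : ZMod (q ^ e)) ^ n = 0 :=
  have ⟨v, hv⟩ := exists_isUnit_pow_sub_one he h
  sum_units_pow_eq_zero_of_isUnit_sub_one v hv

theorem sum_range_mul_eq_nsmul {M : Type*} [AddCommMonoid M] (N r : ℕ) [NeZero N]
    (f : ZMod N → M) : ∑ i ∈ range (N * r), f i = r • ∑ x, f x := by
  have hperiod : ∑ i ∈ range N, f i = ∑ x, f x :=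
    sum_nbij' (fun i => (i : ZMod N)) ZMod.val (by simp) (by simp [ZMod.val_lt])
      (fun i hi => ZMod.val_cast_of_lt (mem_range.1 hi)) (by simp) (by simp)
  induction r with
  | zero => simp
  | succ r ih => simp [Nat.mul_succ, sum_range_add, ih, succ_nsmul, hperiod]

end ZMod

theorem natCast_S_eq_nsmul {M n : ℕ} [NeZero M] (k : ℕ) (h : M ∣ n) :
    (S k n : ZMod M) = (n / M) • ∑ x : ZMod M, x ^ k := by
  obtain ⟨r, rfl⟩ := h
  have hshift : ∑ x : ZMod M, (x + 1) ^ k = ∑ x : ZMod M, x ^ k :=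
    Fintype.sum_equiv (Equiv.addRight 1) _ _ fun _ => rfl
  rw [Nat.mul_div_cancel_left r (NeZero.pos M), ← hshift, ← ZMod.sum_range_mul_eq_nsmul, S,
    ← Ico_add_one_right_eq_Icc, range_eq_Ico, ← sum_Ico_add' _ 0 _ 1]
  push_cast
  rfl

def quotientSum (n : ℕ) : ℕ := ∑ q ∈ n.primeFactors with q - 1 ∣ n, n / q

theorem pow_dvd_sum_div_of_notMem {n q e : ℕ} {F : Finset ℕ} (hq : q.Prime) (hqe : q ^ e ∣ n)
    (hF : F ⊆ n.primeFactors) (hqF : q ∉ F) : q ^ e ∣ ∑ r ∈ F, n / r := by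
  refine dvd_sum fun r hr => ?_
  have hr' := hF hr
  have hcop : Nat.Coprime (q ^ e) r := Nat.Coprime.pow_left e <|
    (Nat.coprime_primes hq (Nat.prime_of_mem_primeFactors hr')).2 fun h => hqF (h ▸ hr)
  refine hcop.dvd_of_dvd_mul_left ?_
  rwa [Nat.mul_div_cancel' (Nat.dvd_of_mem_primeFactors hr')]

theorem totient_prime_pow_dvd {n q e : ℕ} (hq : q.Prime) (he : e ≠ 0) (hqe : q ^ e ∣ n)
    (hq1 : q - 1 ∣ n) : (q ^ e).totient ∣ n := by
  rw [Nat.totient_prime_pow hq (Nat.pos_of_ne_zero he)]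
  refine Nat.Coprime.mul_dvd_of_dvd_of_dvd ?_ ((pow_dvd_pow q (Nat.sub_le e 1)).trans hqe) hq1
  exact Nat.Coprime.pow_left _ ((Nat.coprime_self_sub_right hq.one_le).2 (Nat.coprime_one_right q))

theorem div_mul_totient_add_div {n q e : ℕ} (hq : q.Prime) (he : e ≠ 0) (hqe : q ^ e ∣ n) :
    n / q ^ e * (q ^ e).totient + n / q = n := by
  obtain ⟨k, rfl⟩ := hqe
  obtain ⟨f, rfl⟩ := Nat.exists_eq_succ_of_ne_zero he
  rw [Nat.totient_prime_pow_succ hq, Nat.mul_div_cancel_left _ (pow_pos hq.pos _), pow_succ',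
    mul_assoc, Nat.mul_div_cancel_left _ hq.pos]
  calc k * (q ^ f * (q - 1)) + q ^ f * k = q ^ f * k * (q - 1 + 1) := by ring
    _ = q * (q ^ f * k) := by rw [Nat.sub_add_cancel hq.one_le]; ring

theorem prime_pow_dvd_S_add_quotientSum {n q e : ℕ} (hn : 0 < n) (hq : q.Prime) (hqe : q ^ e ∣ n) :
    q ^ e ∣ S n n + quotientSum n := by
  rcases Nat.eq_zero_or_pos e with rfl | he
  · simp
  have : Fact q.Prime := ⟨hq⟩
  have hen : e ≤ n := ((Nat.lt_pow_self hq.one_lt).le).trans (Nat.le_of_dvd hn hqe)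
  have hS : (S n n : ZMod (q ^ e)) =
      (n / q ^ e) • ∑ u : (ZMod (q ^ e))ˣ, (u : ZMod (q ^ e)) ^ n := by
    rw [natCast_S_eq_nsmul n hqe, ZMod.sum_pow_eq_sum_units_pow he.ne' hen]
  have hsub : {r ∈ n.primeFactors | r - 1 ∣ n} ⊆ n.primeFactors := filter_subset _ _
  by_cases hq1 : q - 1 ∣ n
  · have hmem : q ∈ {r ∈ n.primeFactors | r - 1 ∣ n} :=
      mem_filter.2 ⟨Nat.mem_primeFactors.2 ⟨hq, (dvd_pow_self q he.ne').trans hqe, hn.ne'⟩, hq1⟩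
    rw [quotientSum, ← add_sum_erase _ _ hmem, ← add_assoc]
    refine dvd_add ?_ (pow_dvd_sum_div_of_notMem hq hqe ((erase_subset _ _).trans hsub)
      (notMem_erase q _))
    rw [← ZMod.natCast_eq_zero_iff, Nat.cast_add, hS,
      ZMod.sum_units_pow_of_totient_dvd (totient_prime_pow_dvd hq he.ne' hqe hq1), nsmul_eq_mul,
      ← Nat.cast_mul, ← Nat.cast_add, div_mul_totient_add_div hq he.ne' hqe,
      ZMod.natCast_eq_zero_iff]
    exact hqe
  · have hnotmem : q ∉ {r ∈ n.primeFactors | r - 1 ∣ n} := fun h => hq1 (mem_filter.1 h).2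
    refine dvd_add ?_ (pow_dvd_sum_div_of_notMem hq hqe hsub hnotmem)
    rw [← ZMod.natCast_eq_zero_iff, hS, ZMod.sum_units_pow_prime_pow_eq_zero he.ne' hq1, smul_zero]

theorem dvd_S_add_quotientSum {n : ℕ} (hn : 0 < n) : n ∣ S n n + quotientSum n :=
  (Nat.dvd_iff_prime_pow_dvd_dvd _ _).2 fun _ _ hq hqe =>
    prime_pow_dvd_S_add_quotientSum hn hq hqe

theorem S_modEq_iff_dvd_quotientSum_add {n : ℕ} (hn : 0 < n) (a : ℕ) :
    S n n ≡ a [MOD n] ↔ n ∣ quotientSum n + a := by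
  have h : S n n + quotientSum n ≡ 0 [MOD n] := Nat.modEq_zero_iff_dvd.2 (dvd_S_add_quotientSum hn)
  calc S n n ≡ a [MOD n] ↔ S n n + quotientSum n ≡ a + quotientSum n [MOD n] :=
        ⟨fun h' => h'.add_right _, Nat.ModEq.add_right_cancel' _⟩
    _ ↔ quotientSum n + a ≡ 0 [MOD n] := by
        rw [add_comm a]
        exact ⟨fun h' => h'.symm.trans h, fun h' => h.trans h'.symm⟩
    _ ↔ n ∣ quotientSum n + a := Nat.modEq_zero_iff_dvd

theorem Nat.Prime.mem_of_dvd_1806 {q : ℕ} (hq : q.Prime) (h : q ∣ 1806) :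
    q ∈ ({2, 3, 7, 43} : Set ℕ) := by
  have hfactors : ∀ d ∈ Nat.divisors 1806, d.Prime → d ∈ ({2, 3, 7, 43} : Finset ℕ) := by
    set_option maxRecDepth 10000 in decide
  simpa using hfactors q (Nat.mem_divisors.2 ⟨h, by norm_num⟩) hq

theorem Nat.Prime.dvd_1806_of_sub_one_dvd {q : ℕ} (hq : q.Prime) (h : q - 1 ∣ 1806) :
    q ∣ 1806 := by
  have hclosed : ∀ d ∈ Nat.divisors 1806, (d + 1).Prime → d + 1 ∣ 1806 := by
    set_option maxRecDepth 10000 in decide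
  have hq' : q - 1 + 1 = q := Nat.sub_add_cancel hq.one_le
  simpa [hq'] using hclosed (q - 1) (Nat.mem_divisors.2 ⟨h, by norm_num⟩) (hq'.symm ▸ hq)

theorem Squarefree.dvd_of_forall_mem_primeFactors_dvd {a N : ℕ} (ha : Squarefree a) (hN : N ≠ 0)
    (h : ∀ r ∈ a.primeFactors, r ∣ N) : a ∣ N := by
  rw [← Nat.prod_primeFactors_of_squarefree ha, Nat.prod_primeFactors_dvd_iff hN]
  exact fun r hr => Nat.mem_primeFactors.2 ⟨Nat.prime_of_mem_primeFactors hr, h r hr, hN⟩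

theorem Squarefree.dvd_1806_of_forall_sub_one_dvd {m : ℕ} (hm : Squarefree m)
    (h : ∀ q ∈ m.primeFactors, q - 1 ∣ m) : m ∣ 1806 := by
  refine hm.dvd_of_forall_mem_primeFactors_dvd (by norm_num) fun q => ?_
  induction q using Nat.strong_induction_on with
  | _ q ih =>
    intro hq
    have hq1 := h q hq
    have hqp := Nat.prime_of_mem_primeFactors hq
    refine hqp.dvd_1806_of_sub_one_dvd <|
      (hm.squarefree_of_dvd hq1).dvd_of_forall_mem_primeFactors_dvd (by norm_num) fun r hr => ?_
    have hrq : r < q := (Nat.le_of_dvd (Nat.sub_pos_of_lt hqp.one_lt)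
      (Nat.dvd_of_mem_primeFactors hr)).trans_lt (Nat.sub_lt hqp.pos one_pos)
    exact ih r hrq (Nat.primeFactors_mono hq1 hm.ne_zero hr)

theorem squarefree_of_mem_W {m : ℕ} (hm : m ∈ W) : Squarefree m := by
  obtain ⟨hm0, hdvd⟩ := hm
  refine Nat.squarefree_iff_prime_squarefree.2 fun r hr hrr => hr.one_lt.ne' (Nat.dvd_one.1 ?_)
  have hrm : r ∣ m := (dvd_mul_right r r).trans hrr
  have hmem : r ∈ m.primeFactors := Nat.mem_primeFactors.2 ⟨hr, hrm, hm0.ne'⟩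
  have hsum : r ∣ ∑ q ∈ m.primeFactors, m / q := by
    rw [← add_sum_erase _ _ hmem]
    refine dvd_add ((Nat.dvd_div_iff_mul_dvd hrm).2 hrr) ?_
    simpa using pow_dvd_sum_div_of_notMem (e := 1) hr (by simpa using hrm) (erase_subset _ _)
      (notMem_erase r _)
  exact (Nat.dvd_add_right hsum).1 (hrm.trans hdvd)

theorem frakn_dvd_iff {m : ℕ} (hm : m ≠ 0) (k : ℕ) :
    frakn m ∣ k ↔ ∀ q ∈ m.primeFactors, q - 1 ∣ k * m := by
  have hlcm : frakn m = m.primeFactors.lcm fun q => (q - 1) / Nat.gcd (q - 1) m := by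
    unfold frakn; split_ifs with h <;> simp [h]
  rw [hlcm, Finset.lcm_dvd_iff]
  refine forall₂_congr fun q _ => ?_
  rw [Nat.div_dvd_iff_dvd_mul (Nat.gcd_dvd_left _ _)
    (Nat.gcd_pos_of_pos_right _ (Nat.pos_of_ne_zero hm)), Nat.dvd_gcd_mul_iff_dvd_mul, mul_comm]

section PrimeMultiple

variable {p m : ℕ}

theorem quotientSum_prime_mul (hp : p.Prime) (hm : m ≠ 0) (hp1 : ¬ p - 1 ∣ p * m)
    (hq : ∀ q ∈ m.primeFactors, q - 1 ∣ p * m) :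
    quotientSum (p * m) = p * ∑ q ∈ m.primeFactors, m / q := by
  have hF : {q ∈ (p * m).primeFactors | q - 1 ∣ p * m} = m.primeFactors := by
    ext r
    rw [mem_filter, Nat.primeFactors_mul hp.ne_zero hm, hp.primeFactors, mem_union, mem_singleton]
    constructor
    · rintro ⟨rfl | hr, hr1⟩
      · exact absurd hr1 hp1
      · exact hr
    · exact fun hr => ⟨Or.inr hr, hq r hr⟩
  rw [quotientSum, hF, mul_sum]
  exact sum_congr rfl fun q hq => Nat.mul_div_assoc p (Nat.dvd_of_mem_primeFactors hq)

theorem prime_mul_dvd_quotientSum_add_iff (hp : p.Prime) (hm : m ≠ 0) (hp1 : ¬ p - 1 ∣ p * m)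
    (hq : ∀ q ∈ m.primeFactors, q - 1 ∣ p * m) :
    p * m ∣ quotientSum (p * m) + p ↔ m ∣ ∑ q ∈ m.primeFactors, m / q + 1 := by
  rw [quotientSum_prime_mul hp hm hp1 hq, ← mul_add_one, Nat.mul_dvd_mul_iff_left hp.pos]

theorem not_sub_one_dvd_of_dvd_quotientSum_add (hp : p.Prime) (hm : m ≠ 0) (hpm : ¬ p ∣ m)
    (h : p * m ∣ quotientSum (p * m) + p) : ¬ p - 1 ∣ p * m := by
  intro hp1
  set F := {q ∈ (p * m).primeFactors | q - 1 ∣ p * m}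
  have hmem : p ∈ F :=
    mem_filter.2 ⟨Nat.mem_primeFactors.2 ⟨hp, dvd_mul_right p m, mul_ne_zero hp.ne_zero hm⟩, hp1⟩
  have hrest : p ∣ ∑ q ∈ F.erase p, p * m / q := by
    simpa using pow_dvd_sum_div_of_notMem (e := 1) hp (by simp)
      ((erase_subset _ _).trans (filter_subset _ _)) (notMem_erase p _)
  have hsplit : p ∣ p * m / p + ∑ q ∈ F.erase p, p * m / q + p := by
    rw [add_sum_erase _ _ hmem]
    exact (dvd_mul_right p m).trans h
  rw [Nat.mul_div_cancel_left m hp.pos] at hsplit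
  exact hpm ((Nat.dvd_add_left hrest).1 ((Nat.dvd_add_left (dvd_refl p)).1 hsplit))

theorem sub_one_dvd_of_dvd_quotientSum_add (hp : p.Prime) (hpm : ¬ p ∣ m)
    (h : p * m ∣ quotientSum (p * m) + p) : ∀ q ∈ m.primeFactors, q - 1 ∣ p * m := by
  intro q hq
  by_contra hq1
  have hqp := Nat.prime_of_mem_primeFactors hq
  have hqn : q ∣ p * m := (Nat.dvd_of_mem_primeFactors hq).mul_left p
  have hT : q ∣ quotientSum (p * m) := by
    simpa [quotientSum] using pow_dvd_sum_div_of_notMem (e := 1) hqp (by simpa using hqn)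
      (filter_subset _ _) fun h => hq1 (mem_filter.1 h).2
  have hqeq : q = p :=
    (Nat.prime_dvd_prime_iff_eq hqp hp).1 ((Nat.dvd_add_right hT).1 (hqn.trans h))
  exact hpm (hqeq ▸ Nat.dvd_of_mem_primeFactors hq)

theorem not_sub_one_dvd_of_frakn_dvd (hp : p.Prime) (hne : p ∉ ({2, 3, 7, 43} : Set ℕ))
    (hW : m ∈ W) (hf : frakn m ∣ p) (hf1 : ¬ frakn m - 1 ∣ m) : ¬ p - 1 ∣ m := by
  intro hp1
  rcases hp.eq_one_or_self_of_dvd _ hf with h1 | hfp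
  · have hsub : ∀ q ∈ m.primeFactors, q - 1 ∣ m := by
      simpa using (frakn_dvd_iff hW.1.ne' 1).1 (by rw [h1])
    have hm1806 := (squarefree_of_mem_W hW).dvd_1806_of_forall_sub_one_dvd hsub
    exact hne (hp.mem_of_dvd_1806 (hp.dvd_1806_of_sub_one_dvd (hp1.trans hm1806)))
  · exact hf1 (hfp ▸ hp1)

end PrimeMultiple

/-- For a prime `p ∉ {2, 3, 7, 43}` and `n` a positive multiple of `p`:
`n ∈ M_p^(1)` iff `n/p ∈ 𝒲`, `𝔫_{n/p} ∣ p` and `𝔫_{n/p} - 1 ∤ n/p`. -/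
theorem stmt_18 (p : ℕ) (hp : p.Prime) (hne : p ∉ ({2, 3, 7, 43} : Set ℕ))
    (n : ℕ) (hn : 0 < n) (hpn : p ∣ n) :
    (S n n ≡ p [MOD n] ∧ ¬ p ^ 2 ∣ n) ↔
      (n / p ∈ W ∧ frakn (n / p) ∣ p ∧ ¬ (frakn (n / p) - 1) ∣ (n / p)) := by
  obtain ⟨m, rfl⟩ := hpn
  have hm : m ≠ 0 := by rintro rfl; simp at hn
  have hsq : p ^ 2 ∣ p * m ↔ p ∣ m := by rw [pow_two, Nat.mul_dvd_mul_iff_left hp.pos]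
  rw [Nat.mul_div_cancel_left m hp.pos, S_modEq_iff_dvd_quotientSum_add hn, hsq]
  constructor
  · rintro ⟨h, hpm⟩
    have hp1 := not_sub_one_dvd_of_dvd_quotientSum_add hp hm hpm h
    have hq := sub_one_dvd_of_dvd_quotientSum_add hp hpm h
    have hf : frakn m ∣ p := (frakn_dvd_iff hm p).2 hq
    refine ⟨⟨Nat.pos_of_ne_zero hm, (prime_mul_dvd_quotientSum_add_iff hp hm hp1 hq).1 h⟩, hf, ?_⟩
    rcases hp.eq_one_or_self_of_dvd _ hf with h1 | hfp
    · simpa [h1] using hm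
    · exact fun h' => hp1 ((hfp ▸ h').mul_left p)
  · rintro ⟨hW, hf, hf1⟩
    have hq := (frakn_dvd_iff hm p).1 hf
    have hcop : (p - 1).Coprime p :=
      (Nat.coprime_self_sub_left hp.one_le).2 (Nat.coprime_one_left p)
    have hp1 : ¬ p - 1 ∣ p * m := fun h =>
      not_sub_one_dvd_of_frakn_dvd hp hne hW hf hf1 (hcop.dvd_of_dvd_mul_left h)
    have hpm : ¬ p ∣ m := fun h => hp1 (hq p (Nat.mem_primeFactors.2 ⟨hp, h, hm⟩))
    exact ⟨(prime_mul_dvd_quotientSum_add_iff hp hm hp1 hq).2 hW.2, hpm⟩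
end
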